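/- Let H = Subgroup.closure {σ, τ} ⊆ GL(3, ℂ). Then Nat.card H = 60 and H is isomorphic as a group to the alternating group on 5 letters, i.e. Nonempty (H ≃* alternatingGroup (Fin 5)). (This realizes the icosahedral polyhedral group 𝕀 of Table 1 of the paper.) -/
import Mathlib

open Matrix

structure R5 where
  c0 : ℤ
  c1 : ℤ
  c2 : ℤ
  c3 : ℤ
  c4 : ℤ
deriving DecidableEq
def v (a b c d e : ℤ) : R5 := ⟨a,b,c,d,e⟩
def conv (a b : R5) : R5 := v
 (a.c0*b.c0 + a.c1*b.c4 + a.c2*b.c3 + a.c3*b.c2 + a.c4*b.c1)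
 (a.c0*b.c1 + a.c1*b.c0 + a.c2*b.c4 + a.c3*b.c3 + a.c4*b.c2)
 (a.c0*b.c2 + a.c1*b.c1 + a.c2*b.c0 + a.c3*b.c4 + a.c4*b.c3)
 (a.c0*b.c3 + a.c1*b.c2 + a.c2*b.c1 + a.c3*b.c0 + a.c4*b.c4)
 (a.c0*b.c4 + a.c1*b.c3 + a.c2*b.c2 + a.c3*b.c1 + a.c4*b.c0)
def nrm (a : R5) : R5 := v (a.c0 - a.c4) (a.c1 - a.c4) (a.c2 - a.c4) (a.c3 - a.c4) 0
def addR (a b : R5) : R5 := v (a.c0+b.c0) (a.c1+b.c1) (a.c2+b.c2) (a.c3+b.c3) (a.c4+b.c4)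
def scale5 (a : R5) : R5 := v (5*a.c0) (5*a.c1) (5*a.c2) (5*a.c3) (5*a.c4)
structure M33 where
  x00 : R5
  x01 : R5
  x02 : R5
  x10 : R5
  x11 : R5
  x12 : R5
  x20 : R5
  x21 : R5
  x22 : R5
deriving DecidableEq
def M3 (a b c d e f g h i : R5) : M33 := ⟨a,b,c,d,e,f,g,h,i⟩
def mmulN (A B : M33) : M33 := M3
  (nrm (addR (addR (conv A.x00 B.x00) (conv A.x01 B.x10)) (conv A.x02 B.x20)))
  (nrm (addR (addR (conv A.x00 B.x01) (conv A.x01 B.x11)) (conv A.x02 B.x21)))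
  (nrm (addR (addR (conv A.x00 B.x02) (conv A.x01 B.x12)) (conv A.x02 B.x22)))
  (nrm (addR (addR (conv A.x10 B.x00) (conv A.x11 B.x10)) (conv A.x12 B.x20)))
  (nrm (addR (addR (conv A.x10 B.x01) (conv A.x11 B.x11)) (conv A.x12 B.x21)))
  (nrm (addR (addR (conv A.x10 B.x02) (conv A.x11 B.x12)) (conv A.x12 B.x22)))
  (nrm (addR (addR (conv A.x20 B.x00) (conv A.x21 B.x10)) (conv A.x22 B.x20)))
  (nrm (addR (addR (conv A.x20 B.x01) (conv A.x21 B.x11)) (conv A.x22 B.x21)))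
  (nrm (addR (addR (conv A.x20 B.x02) (conv A.x21 B.x12)) (conv A.x22 B.x22)))
def S5 (A : M33) : M33 := M3 (scale5 A.x00) (scale5 A.x01) (scale5 A.x02) (scale5 A.x10) (scale5 A.x11) (scale5 A.x12) (scale5 A.x20) (scale5 A.x21) (scale5 A.x22)
def pm (f g : Fin 5 → Fin 5) (h1 : ∀ x, g (f x) = x := by decide)
    (h2 : ∀ x, f (g x) = x := by decide) : Equiv.Perm (Fin 5) := ⟨f, g, h1, h2⟩
def LP0 : List (M33 × Equiv.Perm (Fin 5)) := [
  (M3 (v (5) (0) (0) (0) (0)) (v (0) (0) (0) (0) (0)) (v (0) (0) (0) (0) (0)) (v (0) (0) (0) (0) (0)) (v (5) (0) (0) (0) (0)) (v (0) (0) (0) (0) (0)) (v (0) (0) (0) (0) (0)) (v (0) (0) (0) (0) (0)) (v (5) (0) (0) (0) (0)), pm ![0,1,2,3,4] ![0,1,2,3,4]),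
  (M3 (v (5) (0) (0) (0) (0)) (v (0) (0) (0) (0) (0)) (v (0) (0) (0) (0) (0)) (v (0) (0) (0) (0) (0)) (v (0) (5) (0) (0) (0)) (v (0) (0) (0) (0) (0)) (v (0) (0) (0) (0) (0)) (v (0) (0) (0) (0) (0)) (v (-5) (-5) (-5) (-5) (0)), pm ![1,2,3,4,0] ![4,0,1,2,3]),
  (M3 (v (-1) (0) (-2) (-2) (0)) (v (-1) (0) (-2) (-2) (0)) (v (-1) (0) (-2) (-2) (0)) (v (-2) (0) (-4) (-4) (0)) (v (-2) (0) (1) (1) (0)) (v (3) (0) (1) (1) (0)) (v (-2) (0) (-4) (-4) (0)) (v (3) (0) (1) (1) (0)) (v (-2) (0) (1) (1) (0)), pm ![0,2,1,4,3] ![0,2,1,4,3]),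
  (M3 (v (5) (0) (0) (0) (0)) (v (0) (0) (0) (0) (0)) (v (0) (0) (0) (0) (0)) (v (0) (0) (0) (0) (0)) (v (0) (0) (5) (0) (0)) (v (0) (0) (0) (0) (0)) (v (0) (0) (0) (0) (0)) (v (0) (0) (0) (0) (0)) (v (0) (0) (0) (5) (0)), pm ![2,3,4,0,1] ![3,4,0,1,2]),
  (M3 (v (-1) (0) (-2) (-2) (0)) (v (2) (1) (2) (0) (0)) (v (1) (-1) (-1) (1) (0)) (v (-2) (0) (-4) (-4) (0)) (v (-1) (-3) (-1) (0) (0)) (v (-3) (-2) (-2) (-3) (0)) (v (-2) (0) (-4) (-4) (0)) (v (-1) (2) (-1) (0) (0)) (v (2) (3) (3) (2) (0)), pm ![2,1,4,3,0] ![4,1,0,3,2]),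
  (M3 (v (-1) (0) (-2) (-2) (0)) (v (-1) (0) (-2) (-2) (0)) (v (-1) (0) (-2) (-2) (0)) (v (4) (2) (4) (0) (0)) (v (-1) (-3) (-1) (0) (0)) (v (-1) (2) (-1) (0) (0)) (v (2) (-2) (-2) (2) (0)) (v (-3) (-2) (-2) (-3) (0)) (v (2) (3) (3) (2) (0)), pm ![1,3,2,0,4] ![3,0,2,1,4]),
  (M3 (v (5) (0) (0) (0) (0)) (v (0) (0) (0) (0) (0)) (v (0) (0) (0) (0) (0)) (v (0) (0) (0) (0) (0)) (v (0) (0) (0) (5) (0)) (v (0) (0) (0) (0) (0)) (v (0) (0) (0) (0) (0)) (v (0) (0) (0) (0) (0)) (v (0) (0) (5) (0) (0)), pm ![3,4,0,1,2] ![2,3,4,0,1]),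
  (M3 (v (-1) (0) (-2) (-2) (0)) (v (0) (2) (1) (2) (0)) (v (-2) (-2) (0) (-1) (0)) (v (-2) (0) (-4) (-4) (0)) (v (0) (-1) (-3) (-1) (0)) (v (1) (1) (0) (3) (0)) (v (-2) (0) (-4) (-4) (0)) (v (0) (-1) (2) (-1) (0)) (v (1) (1) (0) (-2) (0)), pm ![1,4,3,0,2] ![3,0,4,2,1]),
  (M3 (v (-1) (0) (-2) (-2) (0)) (v (2) (1) (2) (0) (0)) (v (1) (-1) (-1) (1) (0)) (v (4) (2) (4) (0) (0)) (v (0) (-1) (-3) (-1) (0)) (v (3) (0) (1) (1) (0)) (v (2) (-2) (-2) (2) (0)) (v (3) (0) (1) (1) (0)) (v (1) (1) (0) (-2) (0)), pm ![3,2,0,4,1] ![2,4,1,0,3]),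
  (M3 (v (-1) (0) (-2) (-2) (0)) (v (-1) (0) (-2) (-2) (0)) (v (-1) (0) (-2) (-2) (0)) (v (0) (4) (2) (4) (0)) (v (0) (-1) (-3) (-1) (0)) (v (0) (-1) (2) (-1) (0)) (v (-4) (-4) (0) (-2) (0)) (v (1) (1) (0) (3) (0)) (v (1) (1) (0) (-2) (0)), pm ![2,4,3,1,0] ![4,3,0,2,1])]
def LP1 : List (M33 × Equiv.Perm (Fin 5)) := [
  (M3 (v (-1) (0) (-2) (-2) (0)) (v (1) (-1) (-1) (1) (0)) (v (2) (1) (2) (0) (0)) (v (2) (-2) (-2) (2) (0)) (v (1) (1) (0) (-2) (0)) (v (3) (0) (1) (1) (0)) (v (4) (2) (4) (0) (0)) (v (3) (0) (1) (1) (0)) (v (0) (-1) (-3) (-1) (0)), pm ![2,4,1,0,3] ![3,2,0,4,1]),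
  (M3 (v (5) (0) (0) (0) (0)) (v (0) (0) (0) (0) (0)) (v (0) (0) (0) (0) (0)) (v (0) (0) (0) (0) (0)) (v (-5) (-5) (-5) (-5) (0)) (v (0) (0) (0) (0) (0)) (v (0) (0) (0) (0) (0)) (v (0) (0) (0) (0) (0)) (v (0) (5) (0) (0) (0)), pm ![4,0,1,2,3] ![1,2,3,4,0]),
  (M3 (v (-1) (0) (-2) (-2) (0)) (v (-2) (-2) (0) (-1) (0)) (v (0) (2) (1) (2) (0)) (v (-2) (0) (-4) (-4) (0)) (v (1) (1) (0) (-2) (0)) (v (0) (-1) (2) (-1) (0)) (v (-2) (0) (-4) (-4) (0)) (v (1) (1) (0) (3) (0)) (v (0) (-1) (-3) (-1) (0)), pm ![4,3,0,2,1] ![2,4,3,1,0]),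
  (M3 (v (-1) (0) (-2) (-2) (0)) (v (0) (2) (1) (2) (0)) (v (-2) (-2) (0) (-1) (0)) (v (4) (2) (4) (0) (0)) (v (1) (1) (0) (-2) (0)) (v (-3) (-2) (-2) (-3) (0)) (v (2) (-2) (-2) (2) (0)) (v (-1) (2) (-1) (0) (0)) (v (0) (-1) (-3) (-1) (0)), pm ![2,0,4,1,3] ![1,3,0,4,2]),
  (M3 (v (-1) (0) (-2) (-2) (0)) (v (2) (1) (2) (0) (0)) (v (1) (-1) (-1) (1) (0)) (v (0) (4) (2) (4) (0)) (v (1) (1) (0) (-2) (0)) (v (-1) (2) (-1) (0) (0)) (v (-4) (-4) (0) (-2) (0)) (v (-3) (-2) (-2) (-3) (0)) (v (0) (-1) (-3) (-1) (0)), pm ![4,3,1,0,2] ![3,2,4,1,0]),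
  (M3 (v (-1) (0) (-2) (-2) (0)) (v (-1) (0) (-2) (-2) (0)) (v (-1) (0) (-2) (-2) (0)) (v (2) (-2) (-2) (2) (0)) (v (2) (3) (3) (2) (0)) (v (-3) (-2) (-2) (-3) (0)) (v (4) (2) (4) (0) (0)) (v (-1) (2) (-1) (0) (0)) (v (-1) (-3) (-1) (0) (0)), pm ![4,1,0,3,2] ![2,1,4,3,0]),
  (M3 (v (-1) (0) (-2) (-2) (0)) (v (-1) (0) (-2) (-2) (0)) (v (-1) (0) (-2) (-2) (0)) (v (-4) (-4) (0) (-2) (0)) (v (1) (1) (0) (-2) (0)) (v (1) (1) (0) (3) (0)) (v (0) (4) (2) (4) (0)) (v (0) (-1) (2) (-1) (0)) (v (0) (-1) (-3) (-1) (0)), pm ![3,0,4,2,1] ![1,4,3,0,2]),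
  (M3 (v (1) (0) (2) (2) (0)) (v (0) (-2) (-1) (-2) (0)) (v (2) (2) (0) (1) (0)) (v (0) (-4) (-2) (-4) (0)) (v (3) (2) (2) (3) (0)) (v (2) (0) (-1) (-1) (0)) (v (4) (4) (0) (2) (0)) (v (2) (0) (-1) (-1) (0)) (v (1) (-2) (1) (0) (0)), pm ![1,3,4,2,0] ![4,0,3,1,2]),
  (M3 (v (-1) (0) (-2) (-2) (0)) (v (1) (-1) (-1) (1) (0)) (v (2) (1) (2) (0) (0)) (v (-2) (0) (-4) (-4) (0)) (v (2) (3) (3) (2) (0)) (v (-1) (2) (-1) (0) (0)) (v (-2) (0) (-4) (-4) (0)) (v (-3) (-2) (-2) (-3) (0)) (v (-1) (-3) (-1) (0) (0)), pm ![3,0,2,1,4] ![1,3,2,0,4]),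
  (M3 (v (-1) (0) (-2) (-2) (0)) (v (-2) (-2) (0) (-1) (0)) (v (0) (2) (1) (2) (0)) (v (4) (2) (4) (0) (0)) (v (2) (3) (3) (2) (0)) (v (1) (1) (0) (3) (0)) (v (2) (-2) (-2) (2) (0)) (v (0) (-1) (2) (-1) (0)) (v (-1) (-3) (-1) (0) (0)), pm ![0,4,1,3,2] ![0,2,4,3,1])]
def LP2 : List (M33 × Equiv.Perm (Fin 5)) := [
  (M3 (v (-1) (0) (-2) (-2) (0)) (v (0) (2) (1) (2) (0)) (v (-2) (-2) (0) (-1) (0)) (v (0) (4) (2) (4) (0)) (v (2) (3) (3) (2) (0)) (v (3) (0) (1) (1) (0)) (v (-4) (-4) (0) (-2) (0)) (v (3) (0) (1) (1) (0)) (v (-1) (-3) (-1) (0) (0)), pm ![3,1,0,2,4] ![2,1,3,0,4]),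
  (M3 (v (-1) (0) (-2) (-2) (0)) (v (2) (1) (2) (0) (0)) (v (1) (-1) (-1) (1) (0)) (v (2) (-2) (-2) (2) (0)) (v (-2) (0) (1) (1) (0)) (v (1) (1) (0) (3) (0)) (v (4) (2) (4) (0) (0)) (v (0) (-1) (2) (-1) (0)) (v (-2) (0) (1) (1) (0)), pm ![1,0,3,2,4] ![1,0,3,2,4]),
  (M3 (v (-1) (0) (-2) (-2) (0)) (v (2) (1) (2) (0) (0)) (v (1) (-1) (-1) (1) (0)) (v (-4) (-4) (0) (-2) (0)) (v (2) (3) (3) (2) (0)) (v (0) (-1) (2) (-1) (0)) (v (0) (4) (2) (4) (0)) (v (1) (1) (0) (3) (0)) (v (-1) (-3) (-1) (0) (0)), pm ![0,4,2,1,3] ![0,3,2,4,1]),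
  (M3 (v (1) (0) (2) (2) (0)) (v (2) (2) (0) (1) (0)) (v (0) (-2) (-1) (-2) (0)) (v (0) (-4) (-2) (-4) (0)) (v (-3) (0) (-1) (-1) (0)) (v (-2) (-3) (-3) (-2) (0)) (v (4) (4) (0) (2) (0)) (v (1) (3) (1) (0) (0)) (v (-3) (0) (-1) (-1) (0)), pm ![3,4,2,0,1] ![3,4,2,0,1]),
  (M3 (v (1) (0) (2) (2) (0)) (v (2) (2) (0) (1) (0)) (v (0) (-2) (-1) (-2) (0)) (v (4) (4) (0) (2) (0)) (v (1) (-2) (1) (0) (0)) (v (2) (0) (-1) (-1) (0)) (v (0) (-4) (-2) (-4) (0)) (v (2) (0) (-1) (-1) (0)) (v (3) (2) (2) (3) (0)), pm ![4,0,3,1,2] ![1,3,4,2,0]),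
  (M3 (v (1) (0) (2) (2) (0)) (v (0) (-2) (-1) (-2) (0)) (v (2) (2) (0) (1) (0)) (v (4) (4) (0) (2) (0)) (v (-3) (0) (-1) (-1) (0)) (v (1) (3) (1) (0) (0)) (v (0) (-4) (-2) (-4) (0)) (v (-2) (-3) (-3) (-2) (0)) (v (-3) (0) (-1) (-1) (0)), pm ![2,4,0,3,1] ![2,4,0,3,1]),
  (M3 (v (-1) (0) (-2) (-2) (0)) (v (1) (-1) (-1) (1) (0)) (v (2) (1) (2) (0) (0)) (v (4) (2) (4) (0) (0)) (v (-2) (0) (1) (1) (0)) (v (0) (-1) (2) (-1) (0)) (v (2) (-2) (-2) (2) (0)) (v (1) (1) (0) (3) (0)) (v (-2) (0) (1) (1) (0)), pm ![4,1,3,2,0] ![4,1,3,2,0]),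
  (M3 (v (-1) (0) (-2) (-2) (0)) (v (-2) (-2) (0) (-1) (0)) (v (0) (2) (1) (2) (0)) (v (0) (4) (2) (4) (0)) (v (-2) (0) (1) (1) (0)) (v (-3) (-2) (-2) (-3) (0)) (v (-4) (-4) (0) (-2) (0)) (v (-1) (2) (-1) (0) (0)) (v (-2) (0) (1) (1) (0)), pm ![1,0,2,4,3] ![1,0,2,4,3]),
  (M3 (v (-1) (0) (-2) (-2) (0)) (v (0) (2) (1) (2) (0)) (v (-2) (-2) (0) (-1) (0)) (v (2) (-2) (-2) (2) (0)) (v (-1) (-3) (-1) (0) (0)) (v (0) (-1) (2) (-1) (0)) (v (4) (2) (4) (0) (0)) (v (1) (1) (0) (3) (0)) (v (2) (3) (3) (2) (0)), pm ![0,3,2,4,1] ![0,4,2,1,3]),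
  (M3 (v (-1) (0) (-2) (-2) (0)) (v (0) (2) (1) (2) (0)) (v (-2) (-2) (0) (-1) (0)) (v (-4) (-4) (0) (-2) (0)) (v (-2) (0) (1) (1) (0)) (v (-1) (2) (-1) (0) (0)) (v (0) (4) (2) (4) (0)) (v (-3) (-2) (-2) (-3) (0)) (v (-2) (0) (1) (1) (0)), pm ![4,2,1,3,0] ![4,2,1,3,0])]
def LP3 : List (M33 × Equiv.Perm (Fin 5)) := [
  (M3 (v (1) (0) (2) (2) (0)) (v (-1) (1) (1) (-1) (0)) (v (-2) (-1) (-2) (0) (0)) (v (0) (-4) (-2) (-4) (0)) (v (1) (-2) (1) (0) (0)) (v (-1) (-1) (0) (2) (0)) (v (4) (4) (0) (2) (0)) (v (0) (1) (3) (1) (0)) (v (3) (2) (2) (3) (0)), pm ![4,2,0,1,3] ![2,3,1,4,0]),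
  (M3 (v (1) (0) (2) (2) (0)) (v (-1) (1) (1) (-1) (0)) (v (-2) (-1) (-2) (0) (0)) (v (4) (4) (0) (2) (0)) (v (0) (1) (-2) (1) (0)) (v (-2) (-3) (-3) (-2) (0)) (v (0) (-4) (-2) (-4) (0)) (v (1) (3) (1) (0) (0)) (v (-1) (-1) (0) (-3) (0)), pm ![0,3,1,2,4] ![0,2,3,1,4]),
  (M3 (v (1) (0) (2) (2) (0)) (v (2) (2) (0) (1) (0)) (v (0) (-2) (-1) (-2) (0)) (v (-2) (2) (2) (-2) (0)) (v (0) (1) (-2) (1) (0)) (v (1) (3) (1) (0) (0)) (v (-4) (-2) (-4) (0) (0)) (v (-2) (-3) (-3) (-2) (0)) (v (-1) (-1) (0) (-3) (0)), pm ![0,1,4,2,3] ![0,1,3,4,2]),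
  (M3 (v (1) (0) (2) (2) (0)) (v (0) (-2) (-1) (-2) (0)) (v (2) (2) (0) (1) (0)) (v (-2) (2) (2) (-2) (0)) (v (1) (-2) (1) (0) (0)) (v (0) (1) (3) (1) (0)) (v (-4) (-2) (-4) (0) (0)) (v (-1) (-1) (0) (2) (0)) (v (3) (2) (2) (3) (0)), pm ![3,0,1,4,2] ![1,2,4,0,3]),
  (M3 (v (-1) (0) (-2) (-2) (0)) (v (1) (-1) (-1) (1) (0)) (v (2) (1) (2) (0) (0)) (v (-4) (-4) (0) (-2) (0)) (v (0) (-1) (-3) (-1) (0)) (v (-3) (-2) (-2) (-3) (0)) (v (0) (4) (2) (4) (0)) (v (-1) (2) (-1) (0) (0)) (v (1) (1) (0) (-2) (0)), pm ![1,3,0,4,2] ![2,0,4,1,3]),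
  (M3 (v (-1) (0) (-2) (-2) (0)) (v (1) (-1) (-1) (1) (0)) (v (2) (1) (2) (0) (0)) (v (0) (4) (2) (4) (0)) (v (-1) (-3) (-1) (0) (0)) (v (1) (1) (0) (3) (0)) (v (-4) (-4) (0) (-2) (0)) (v (0) (-1) (2) (-1) (0)) (v (2) (3) (3) (2) (0)), pm ![0,2,4,3,1] ![0,4,1,3,2]),
  (M3 (v (-1) (0) (-2) (-2) (0)) (v (-2) (-2) (0) (-1) (0)) (v (0) (2) (1) (2) (0)) (v (2) (-2) (-2) (2) (0)) (v (0) (-1) (-3) (-1) (0)) (v (-1) (2) (-1) (0) (0)) (v (4) (2) (4) (0) (0)) (v (-3) (-2) (-2) (-3) (0)) (v (1) (1) (0) (-2) (0)), pm ![3,2,4,1,0] ![4,3,1,0,2]),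
  (M3 (v (-1) (0) (-2) (-2) (0)) (v (-2) (-2) (0) (-1) (0)) (v (0) (2) (1) (2) (0)) (v (-4) (-4) (0) (-2) (0)) (v (-1) (-3) (-1) (0) (0)) (v (3) (0) (1) (1) (0)) (v (0) (4) (2) (4) (0)) (v (3) (0) (1) (1) (0)) (v (2) (3) (3) (2) (0)), pm ![2,1,3,0,4] ![3,1,0,2,4]),
  (M3 (v (1) (0) (2) (2) (0)) (v (1) (0) (2) (2) (0)) (v (1) (0) (2) (2) (0)) (v (0) (-4) (-2) (-4) (0)) (v (0) (1) (-2) (1) (0)) (v (0) (1) (3) (1) (0)) (v (4) (4) (0) (2) (0)) (v (-1) (-1) (0) (2) (0)) (v (-1) (-1) (0) (-3) (0)), pm ![2,0,1,3,4] ![1,2,0,3,4]),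
  (M3 (v (1) (0) (2) (2) (0)) (v (1) (0) (2) (2) (0)) (v (1) (0) (2) (2) (0)) (v (4) (4) (0) (2) (0)) (v (-1) (-1) (0) (-3) (0)) (v (-1) (-1) (0) (2) (0)) (v (0) (-4) (-2) (-4) (0)) (v (0) (1) (3) (1) (0)) (v (0) (1) (-2) (1) (0)), pm ![3,1,2,4,0] ![4,1,2,0,3])]
def LP4 : List (M33 × Equiv.Perm (Fin 5)) := [
  (M3 (v (1) (0) (2) (2) (0)) (v (-1) (1) (1) (-1) (0)) (v (-2) (-1) (-2) (0) (0)) (v (-2) (2) (2) (-2) (0)) (v (-1) (-1) (0) (-3) (0)) (v (2) (0) (-1) (-1) (0)) (v (-4) (-2) (-4) (0) (0)) (v (2) (0) (-1) (-1) (0)) (v (0) (1) (-2) (1) (0)), pm ![1,4,2,3,0] ![4,0,2,3,1]),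
  (M3 (v (1) (0) (2) (2) (0)) (v (2) (2) (0) (1) (0)) (v (0) (-2) (-1) (-2) (0)) (v (2) (0) (4) (4) (0)) (v (-1) (-1) (0) (-3) (0)) (v (0) (1) (3) (1) (0)) (v (2) (0) (4) (4) (0)) (v (-1) (-1) (0) (2) (0)) (v (0) (1) (-2) (1) (0)), pm ![1,2,0,3,4] ![2,0,1,3,4]),
  (M3 (v (1) (0) (2) (2) (0)) (v (0) (-2) (-1) (-2) (0)) (v (2) (2) (0) (1) (0)) (v (-4) (-2) (-4) (0) (0)) (v (-1) (-1) (0) (-3) (0)) (v (-2) (-3) (-3) (-2) (0)) (v (-2) (2) (2) (-2) (0)) (v (1) (3) (1) (0) (0)) (v (0) (1) (-2) (1) (0)), pm ![0,2,3,1,4] ![0,3,1,2,4]),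
  (M3 (v (1) (0) (2) (2) (0)) (v (0) (-2) (-1) (-2) (0)) (v (2) (2) (0) (1) (0)) (v (2) (0) (4) (4) (0)) (v (0) (1) (-2) (1) (0)) (v (-1) (-1) (0) (2) (0)) (v (2) (0) (4) (4) (0)) (v (0) (1) (3) (1) (0)) (v (-1) (-1) (0) (-3) (0)), pm ![4,1,2,0,3] ![3,1,2,4,0]),
  (M3 (v (1) (0) (2) (2) (0)) (v (-2) (-1) (-2) (0) (0)) (v (-1) (1) (1) (-1) (0)) (v (-4) (-2) (-4) (0) (0)) (v (0) (1) (-2) (1) (0)) (v (2) (0) (-1) (-1) (0)) (v (-2) (2) (2) (-2) (0)) (v (2) (0) (-1) (-1) (0)) (v (-1) (-1) (0) (-3) (0)), pm ![4,0,2,3,1] ![1,4,2,3,0]),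
  (M3 (v (1) (0) (2) (2) (0)) (v (-2) (-1) (-2) (0) (0)) (v (-1) (1) (1) (-1) (0)) (v (0) (-4) (-2) (-4) (0)) (v (-1) (-1) (0) (-3) (0)) (v (1) (3) (1) (0) (0)) (v (4) (4) (0) (2) (0)) (v (-2) (-3) (-3) (-2) (0)) (v (0) (1) (-2) (1) (0)), pm ![0,1,3,4,2] ![0,1,4,2,3]),
  (M3 (v (1) (0) (2) (2) (0)) (v (-2) (-1) (-2) (0) (0)) (v (-1) (1) (1) (-1) (0)) (v (4) (4) (0) (2) (0)) (v (3) (2) (2) (3) (0)) (v (0) (1) (3) (1) (0)) (v (0) (-4) (-2) (-4) (0)) (v (-1) (-1) (0) (2) (0)) (v (1) (-2) (1) (0) (0)), pm ![1,2,4,0,3] ![3,0,1,4,2]),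
  (M3 (v (1) (0) (2) (2) (0)) (v (1) (0) (2) (2) (0)) (v (1) (0) (2) (2) (0)) (v (-2) (2) (2) (-2) (0)) (v (3) (2) (2) (3) (0)) (v (-2) (-3) (-3) (-2) (0)) (v (-4) (-2) (-4) (0) (0)) (v (1) (3) (1) (0) (0)) (v (1) (-2) (1) (0) (0)), pm ![4,2,3,0,1] ![3,4,1,2,0]),
  (M3 (v (1) (0) (2) (2) (0)) (v (-1) (1) (1) (-1) (0)) (v (-2) (-1) (-2) (0) (0)) (v (2) (0) (4) (4) (0)) (v (3) (2) (2) (3) (0)) (v (1) (3) (1) (0) (0)) (v (2) (0) (4) (4) (0)) (v (-2) (-3) (-3) (-2) (0)) (v (1) (-2) (1) (0) (0)), pm ![2,0,3,4,1] ![1,4,0,2,3]),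
  (M3 (v (1) (0) (2) (2) (0)) (v (2) (2) (0) (1) (0)) (v (0) (-2) (-1) (-2) (0)) (v (-4) (-2) (-4) (0) (0)) (v (3) (2) (2) (3) (0)) (v (-1) (-1) (0) (2) (0)) (v (-2) (2) (2) (-2) (0)) (v (0) (1) (3) (1) (0)) (v (1) (-2) (1) (0) (0)), pm ![2,3,1,4,0] ![4,2,0,1,3])]
def LP5 : List (M33 × Equiv.Perm (Fin 5)) := [
  (M3 (v (-5) (0) (0) (0) (0)) (v (0) (0) (0) (0) (0)) (v (0) (0) (0) (0) (0)) (v (0) (0) (0) (0) (0)) (v (0) (0) (0) (0) (0)) (v (0) (0) (-5) (0) (0)) (v (0) (0) (0) (0) (0)) (v (0) (0) (0) (-5) (0)) (v (0) (0) (0) (0) (0)), pm ![2,1,0,4,3] ![2,1,0,4,3]),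
  (M3 (v (-5) (0) (0) (0) (0)) (v (0) (0) (0) (0) (0)) (v (0) (0) (0) (0) (0)) (v (0) (0) (0) (0) (0)) (v (0) (0) (0) (0) (0)) (v (0) (0) (0) (-5) (0)) (v (0) (0) (0) (0) (0)) (v (0) (0) (-5) (0) (0)) (v (0) (0) (0) (0) (0)), pm ![3,2,1,0,4] ![3,2,1,0,4]),
  (M3 (v (1) (0) (2) (2) (0)) (v (-2) (-1) (-2) (0) (0)) (v (-1) (1) (1) (-1) (0)) (v (-2) (2) (2) (-2) (0)) (v (-3) (0) (-1) (-1) (0)) (v (-1) (-1) (0) (2) (0)) (v (-4) (-2) (-4) (0) (0)) (v (0) (1) (3) (1) (0)) (v (-3) (0) (-1) (-1) (0)), pm ![2,3,0,1,4] ![2,3,0,1,4]),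
  (M3 (v (1) (0) (2) (2) (0)) (v (1) (0) (2) (2) (0)) (v (1) (0) (2) (2) (0)) (v (2) (0) (4) (4) (0)) (v (-3) (0) (-1) (-1) (0)) (v (2) (0) (-1) (-1) (0)) (v (2) (0) (4) (4) (0)) (v (2) (0) (-1) (-1) (0)) (v (-3) (0) (-1) (-1) (0)), pm ![0,3,4,1,2] ![0,3,4,1,2]),
  (M3 (v (1) (0) (2) (2) (0)) (v (-1) (1) (1) (-1) (0)) (v (-2) (-1) (-2) (0) (0)) (v (-4) (-2) (-4) (0) (0)) (v (-3) (0) (-1) (-1) (0)) (v (0) (1) (3) (1) (0)) (v (-2) (2) (2) (-2) (0)) (v (-1) (-1) (0) (2) (0)) (v (-3) (0) (-1) (-1) (0)), pm ![3,1,4,0,2] ![3,1,4,0,2]),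
  (M3 (v (-5) (0) (0) (0) (0)) (v (0) (0) (0) (0) (0)) (v (0) (0) (0) (0) (0)) (v (0) (0) (0) (0) (0)) (v (0) (0) (0) (0) (0)) (v (0) (-5) (0) (0) (0)) (v (0) (0) (0) (0) (0)) (v (5) (5) (5) (5) (0)) (v (0) (0) (0) (0) (0)), pm ![1,0,4,3,2] ![1,0,4,3,2]),
  (M3 (v (-5) (0) (0) (0) (0)) (v (0) (0) (0) (0) (0)) (v (0) (0) (0) (0) (0)) (v (0) (0) (0) (0) (0)) (v (0) (0) (0) (0) (0)) (v (5) (5) (5) (5) (0)) (v (0) (0) (0) (0) (0)) (v (0) (-5) (0) (0) (0)) (v (0) (0) (0) (0) (0)), pm ![4,3,2,1,0] ![4,3,2,1,0]),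
  (M3 (v (1) (0) (2) (2) (0)) (v (-2) (-1) (-2) (0) (0)) (v (-1) (1) (1) (-1) (0)) (v (2) (0) (4) (4) (0)) (v (1) (-2) (1) (0) (0)) (v (-2) (-3) (-3) (-2) (0)) (v (2) (0) (4) (4) (0)) (v (1) (3) (1) (0) (0)) (v (3) (2) (2) (3) (0)), pm ![3,4,1,2,0] ![4,2,3,0,1]),
  (M3 (v (1) (0) (2) (2) (0)) (v (1) (0) (2) (2) (0)) (v (1) (0) (2) (2) (0)) (v (-4) (-2) (-4) (0) (0)) (v (1) (-2) (1) (0) (0)) (v (1) (3) (1) (0) (0)) (v (-2) (2) (2) (-2) (0)) (v (-2) (-3) (-3) (-2) (0)) (v (3) (2) (2) (3) (0)), pm ![1,4,0,2,3] ![2,0,3,4,1]),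
  (M3 (v (-5) (0) (0) (0) (0)) (v (0) (0) (0) (0) (0)) (v (0) (0) (0) (0) (0)) (v (0) (0) (0) (0) (0)) (v (0) (0) (0) (0) (0)) (v (-5) (0) (0) (0) (0)) (v (0) (0) (0) (0) (0)) (v (-5) (0) (0) (0) (0)) (v (0) (0) (0) (0) (0)), pm ![0,4,3,2,1] ![0,4,3,2,1])]
def LP : List (M33 × Equiv.Perm (Fin 5)) := LP0 ++ LP1 ++ LP2 ++ LP3 ++ LP4 ++ LP5
def preds : List (Bool × Nat) := [(true, 0), (false, 0), (true, 1), (false, 1), (true, 2), (true, 3), (false, 3), (true, 4), (true, 5), (false, 5), (true, 6), (false, 6), (true, 7), (true, 8), (false, 8), (true, 9), (false, 9), (true, 10), (true, 12), (true, 13), (false, 13), (true, 14), (false, 14), (false, 16), (true, 17), (true, 18), (true, 19), (false, 19), (true, 20), (false, 20), (false, 22), (true, 24), (true, 25), (false, 25), (true, 26), (false, 26), (true, 27), (false, 27), (false, 29), (true, 31), (true, 32), (false, 32), (true, 33), (false, 33), (false, 35), (false, 37), (true, 39), (true, 40), (false, 40), (false, 41), (false, 43), (true, 46), (true, 47), (false,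 47), (false, 48), (true, 51), (true, 52), (false, 52), (false, 53)]
def Msig : M33 := M3 (v (5) (0) (0) (0) (0)) (v (0) (0) (0) (0) (0)) (v (0) (0) (0) (0) (0)) (v (0) (0) (0) (0) (0)) (v (0) (5) (0) (0) (0)) (v (0) (0) (0) (0) (0)) (v (0) (0) (0) (0) (0)) (v (0) (0) (0) (0) (0)) (v (-5) (-5) (-5) (-5) (0))
def Mtau : M33 := M3 (v (-1) (0) (-2) (-2) (0)) (v (-1) (0) (-2) (-2) (0)) (v (-1) (0) (-2) (-2) (0)) (v (-2) (0) (-4) (-4) (0)) (v (-2) (0) (1) (1) (0)) (v (3) (0) (1) (1) (0)) (v (-2) (0) (-4) (-4) (0)) (v (3) (0) (1) (1) (0)) (v (-2) (0) (1) (1) (0))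
def idM : M33 := M3 (v (5) (0) (0) (0) (0)) (v (0) (0) (0) (0) (0)) (v (0) (0) (0) (0) (0)) (v (0) (0) (0) (0) (0)) (v (5) (0) (0) (0) (0)) (v (0) (0) (0) (0) (0)) (v (0) (0) (0) (0) (0)) (v (0) (0) (0) (0) (0)) (v (5) (0) (0) (0) (0))
def Lm : List M33 := LP.map Prod.fst
def pi0 : M33 → Equiv.Perm (Fin 5) := fun A => (((LP.find? fun p => decide (p.1 = A)).map Prod.snd).getD 1)
def pi1 : M33 → Equiv.Perm (Fin 5) := fun X => (((LP.find? fun p => decide (S5 p.1 = X)).map Prod.snd).getD 1)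
abbrev nrmd (A : M33) : Prop := A.x00.c4 = 0 ∧ A.x01.c4 = 0 ∧ A.x02.c4 = 0 ∧ A.x10.c4 = 0 ∧ A.x11.c4 = 0 ∧ A.x12.c4 = 0 ∧ A.x20.c4 = 0 ∧ A.x21.c4 = 0 ∧ A.x22.c4 = 0
set_option maxRecDepth 1000000 in
set_option maxHeartbeats 4000000 in
lemma F1 : idM ∈ Lm ∧ Msig ∈ Lm ∧ Mtau ∈ Lm := by decide
set_option maxRecDepth 1000000 in
set_option maxHeartbeats 4000000 in
lemma F2 : ∀ A ∈ Lm, (∃ B ∈ Lm, S5 B = mmulN Msig A) ∧ (∃ B ∈ Lm, S5 B = mmulN Mtau A) := by decide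
set_option maxRecDepth 1000000 in
set_option maxHeartbeats 4000000 in
lemma F3 : ∀ A ∈ Lm, pi1 (mmulN Msig A) = pi0 Msig * pi0 A ∧ pi1 (mmulN Mtau A) = pi0 Mtau * pi0 A := by decide
set_option maxRecDepth 1000000 in
set_option maxHeartbeats 4000000 in
lemma F3b : ∀ A ∈ Lm, pi1 (S5 A) = pi0 A := by decide
set_option maxRecDepth 1000000 in
set_option maxHeartbeats 4000000 in
lemma F4 : pi0 idM = 1 := by decide
set_option maxRecDepth 1000000 in
set_option maxHeartbeats 4000000 in
lemma F5 : (Lm.map pi0).Nodup := by decide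
set_option maxRecDepth 1000000 in
set_option maxHeartbeats 4000000 in
lemma F6 : ∀ A ∈ Lm, Equiv.Perm.sign (pi0 A) = 1 := by decide
set_option maxRecDepth 1000000 in
set_option maxHeartbeats 4000000 in
lemma F7 : ∀ A ∈ Lm, nrmd A := by decide
set_option maxRecDepth 1000000 in
set_option maxHeartbeats 4000000 in
lemma F8 : Lm.length = 60 ∧ preds.length = 59 ∧ Lm.getD 0 idM = idM ∧
    (∀ k, k < 59 → (preds.getD k (true,0)).2 ≤ k ∧
      S5 (Lm.getD (k+1) idM) = mmulN (bif (preds.getD k (true,0)).1 then Msig else Mtau) (Lm.getD (preds.getD k (true,0)).2 idM)) := by decide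
noncomputable section
open Polynomial

def phi (ε : ℂ) (a : R5) : ℂ := (a.c0 : ℂ) + a.c1*ε + a.c2*ε^2 + a.c3*ε^3 + a.c4*ε^4

variable {ε : ℂ}

lemma phi_conv (hε5 : ε^5 = 1) (a b : R5) : phi ε (conv a b) = phi ε a * phi ε b := by
  simp only [phi, conv, v]
  push_cast
  linear_combination (-((a.c1:ℂ)*(b.c4) + (a.c2:ℂ)*(b.c3) + (a.c3:ℂ)*(b.c2) + (a.c4:ℂ)*(b.c1))
    - ((a.c2:ℂ)*(b.c4) + (a.c3:ℂ)*(b.c3) + (a.c4:ℂ)*(b.c2))*ε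
    - ((a.c3:ℂ)*(b.c4) + (a.c4:ℂ)*(b.c3))*ε^2 - ((a.c4:ℂ)*(b.c4))*ε^3) * hε5

lemma phi_nrm (hsum : 1 + ε + ε^2 + ε^3 + ε^4 = 0) (a : R5) : phi ε (nrm a) = phi ε a := by
  simp only [phi, nrm, v]
  push_cast
  linear_combination (-(a.c4:ℂ)) * hsum

lemma phi_addR (a b : R5) : phi ε (addR a b) = phi ε a + phi ε b := by
  simp only [phi, addR, v]; push_cast; ring

lemma phi_scale5 (a : R5) : phi ε (scale5 a) = 5 * phi ε a := by
  simp only [phi, scale5, v]; push_cast; ring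

lemma indep (hprim : IsPrimitiveRoot ε 5) (c0 c1 c2 c3 : ℚ)
    (h : (c0:ℂ) + c1*ε + c2*ε^2 + c3*ε^3 = 0) : c0 = 0 ∧ c1 = 0 ∧ c2 = 0 ∧ c3 = 0 := by
  set p : ℚ[X] := C c0 + C c1 * X + C c2 * X^2 + C c3 * X^3 with hp
  have hcoeff : p.coeff 0 = c0 ∧ p.coeff 1 = c1 ∧ p.coeff 2 = c2 ∧ p.coeff 3 = c3 := by
    refine ⟨?_, ?_, ?_, ?_⟩ <;>
      simp [hp, coeff_add, coeff_C, coeff_C_mul, coeff_X_pow, coeff_X]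
  have hpz : p = 0 := by
    by_contra hpne
    have haev : (aeval ε) p = 0 := by
      simp only [hp, map_add, _root_.map_mul, map_pow, aeval_C, aeval_X]
      rw [show (algebraMap ℚ ℂ) c0 = (c0:ℂ) from rfl, show (algebraMap ℚ ℂ) c1 = (c1:ℂ) from rfl,
        show (algebraMap ℚ ℂ) c2 = (c2:ℂ) from rfl, show (algebraMap ℚ ℂ) c3 = (c3:ℂ) from rfl]
      push_cast
      linear_combination h
    have hdvd := minpoly.dvd ℚ ε haev
    rw [← Polynomial.cyclotomic_eq_minpoly_rat hprim (by norm_num)] at hdvd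
    have h4 : (Polynomial.cyclotomic 5 ℚ).natDegree = 4 := by
      rw [Polynomial.natDegree_cyclotomic]; decide
    have hle := Polynomial.natDegree_le_of_dvd hdvd hpne
    have hdeg : p.natDegree ≤ 3 := by
      simp only [hp]
      compute_degree
    omega
  obtain ⟨h0, h1, h2, h3⟩ := hcoeff
  rw [hpz, coeff_zero] at h0 h1 h2 h3
  exact ⟨h0.symm, h1.symm, h2.symm, h3.symm⟩

end
noncomputable section
namespace IcoAux

variable {ε : ℂ}

def evm (ε : ℂ) (A : M33) : Matrix (Fin 3) (Fin 3) ℂ :=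
  !![phi ε A.x00 / 5, phi ε A.x01 / 5, phi ε A.x02 / 5;
     phi ε A.x10 / 5, phi ε A.x11 / 5, phi ε A.x12 / 5;
     phi ε A.x20 / 5, phi ε A.x21 / 5, phi ε A.x22 / 5]

lemma entry_eq (hε5 : ε^5 = 1) (hsum : 1 + ε + ε^2 + ε^3 + ε^4 = 0)
    {a1 a2 a3 b1 b2 b3 c : R5}
    (h : scale5 c = nrm (addR (addR (conv a1 b1) (conv a2 b2)) (conv a3 b3))) :
    phi ε a1/5 * (phi ε b1/5) + phi ε a2/5 * (phi ε b2/5) + phi ε a3/5 * (phi ε b3/5)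
      = phi ε c / 5 := by
  have h2 := congrArg (phi ε) h
  rw [phi_scale5, phi_nrm hsum, phi_addR, phi_addR, phi_conv hε5, phi_conv hε5, phi_conv hε5] at h2
  linear_combination (-1/25 : ℂ) * h2

lemma evm_mul (hε5 : ε^5 = 1) (hsum : 1 + ε + ε^2 + ε^3 + ε^4 = 0)
    {A B C : M33} (h : S5 C = mmulN A B) : evm ε A * evm ε B = evm ε C := by
  obtain ⟨h00, h01, h02, h10, h11, h12, h20, h21, h22⟩ :=
    (M33.mk.injEq _ _ _ _ _ _ _ _ _ _ _ _ _ _ _ _ _ _).mp h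
  ext i j
  fin_cases i <;> fin_cases j <;>
    simp only [evm, Matrix.mul_apply, Fin.sum_univ_three, Matrix.cons_val', Matrix.cons_val_zero,
      Matrix.cons_val_one, Matrix.head_cons, Matrix.empty_val', Matrix.cons_val_fin_one,
      Matrix.head_fin_const, Matrix.cons_val_two, Matrix.tail_cons, Matrix.of_apply] <;>
    [exact entry_eq hε5 hsum h00; exact entry_eq hε5 hsum h01; exact entry_eq hε5 hsum h02;
     exact entry_eq hε5 hsum h10; exact entry_eq hε5 hsum h11; exact entry_eq hε5 hsum h12;
     exact entry_eq hε5 hsum h20; exact entry_eq hε5 hsum h21; exact entry_eq hε5 hsum h22]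

lemma phi_inj (hprim : IsPrimitiveRoot ε 5) {a b : R5} (ha : a.c4 = 0) (hb : b.c4 = 0)
    (h : phi ε a / 5 = phi ε b / 5) : a = b := by
  obtain ⟨a0,a1,a2,a3,a4⟩ := a
  obtain ⟨b0,b1,b2,b3,b4⟩ := b
  simp only at ha hb
  subst ha hb
  have h' : ((a0 - b0 : ℤ) : ℚ) + ((a1 - b1 : ℤ) : ℚ) * ε + ((a2 - b2 : ℤ) : ℚ) * ε^2
      + ((a3 - b3 : ℤ) : ℚ) * ε^3 = 0 := by
    simp only [phi] at h
    push_cast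
    push_cast at h
    linear_combination 5 * h
  obtain ⟨e0, e1, e2, e3⟩ := indep hprim _ _ _ _ h'
  have : a0 = b0 ∧ a1 = b1 ∧ a2 = b2 ∧ a3 = b3 := by
    constructor
    · exact_mod_cast sub_eq_zero.mp (by exact_mod_cast e0)
    constructor
    · exact_mod_cast sub_eq_zero.mp (by exact_mod_cast e1)
    constructor
    · exact_mod_cast sub_eq_zero.mp (by exact_mod_cast e2)
    · exact_mod_cast sub_eq_zero.mp (by exact_mod_cast e3)
  simp [this.1, this.2.1, this.2.2.1, this.2.2.2]

lemma evm_inj (hprim : IsPrimitiveRoot ε 5) {A B : M33} (ha : nrmd A) (hb : nrmd B)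
    (h : evm ε A = evm ε B) : A = B := by
  have he : ∀ i j, evm ε A i j = evm ε B i j := fun i j => by rw [h]
  obtain ⟨ha0,ha1,ha2,ha3,ha4,ha5,ha6,ha7,ha8⟩ := ha
  obtain ⟨hb0,hb1,hb2,hb3,hb4,hb5,hb6,hb7,hb8⟩ := hb
  obtain ⟨A0,A1,A2,A3,A4,A5,A6,A7,A8⟩ := A
  obtain ⟨B0,B1,B2,B3,B4,B5,B6,B7,B8⟩ := B
  simp only [M33.mk.injEq]
  refine ⟨?_,?_,?_,?_,?_,?_,?_,?_,?_⟩ <;>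
    apply phi_inj hprim (by assumption) (by assumption)
  · simpa [evm] using he 0 0
  · simpa [evm] using he 0 1
  · simpa [evm] using he 0 2
  · simpa [evm] using he 1 0
  · simpa [evm] using he 1 1
  · simpa [evm] using he 1 2
  · simpa [evm] using he 2 0
  · simpa [evm] using he 2 1
  · simpa [evm] using he 2 2

end IcoAux
end
set_option maxHeartbeats 1000000 in
/-- The subgroup of `GL(3, ℂ)` generated by `σ = diag(1, ε, ε⁴)` and
`τ = (t - s)⁻¹ • [[1,1,1],[2,s,t],[2,t,s]]`, where `ε = exp(2πi/5)`, `s = ε² + ε³` and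
`t = ε + ε⁴` (so that `t - s = √5`), has order `60` and is isomorphic to the alternating
group `A₅`.  This realizes the icosahedral polyhedral group `𝕀` of Table 1 of the paper. -/
theorem icosahedral_polyhedral_group (ε s t : ℂ)
    (hε : ε = Complex.exp (2 * Real.pi * Complex.I / 5))
    (hs : s = ε ^ 2 + ε ^ 3) (ht : t = ε + ε ^ 4)
    (σ τ : GL (Fin 3) ℂ)
    (hσ : (σ : Matrix (Fin 3) (Fin 3) ℂ) = !![1, 0, 0; 0, ε, 0; 0, 0, ε ^ 4])
    (hτ : (τ : Matrix (Fin 3) (Fin 3) ℂ) = (t - s)⁻¹ • !![1, 1, 1; 2, s, t; 2, t, s]) :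
    Nat.card ↥(Subgroup.closure {σ, τ} : Subgroup (GL (Fin 3) ℂ)) = 60 ∧
      Nonempty (↥(Subgroup.closure {σ, τ} : Subgroup (GL (Fin 3) ℂ)) ≃*
        ↥(alternatingGroup (Fin 5))) := by
  classical
  subst hs ht
  have hprim : IsPrimitiveRoot ε 5 := by
    rw [hε]
    have := Complex.isPrimitiveRoot_exp 5 (by norm_num)
    simpa using this
  have hε5 : ε ^ 5 = 1 := hprim.pow_eq_one
  have hsum : 1 + ε + ε^2 + ε^3 + ε^4 = 0 := by
    have h := hprim.geom_sum_eq_zero (by norm_num)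
    simp [Finset.sum_range_succ] at h
    linear_combination h
  have hti : ((ε + ε^4) - (ε^2 + ε^3))⁻¹ = (-1 - 2*ε^2 - 2*ε^3)/5 := by
    apply inv_eq_of_mul_eq_one_right
    linear_combination ((-1 : ℂ) + (4/5 : ℂ) * ε + (2/5 : ℂ) * ε^2 + (-2/5 : ℂ) * ε^3) * hsum
  have hσc : (↑σ : Matrix (Fin 3) (Fin 3) ℂ) = IcoAux.evm ε Msig := by
    rw [hσ]
    ext i j
    fin_cases i <;> fin_cases j <;>
      simp [IcoAux.evm, Msig, M3, v, phi] <;>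
      linear_combination hsum
  have hτc : (↑τ : Matrix (Fin 3) (Fin 3) ℂ) = IcoAux.evm ε Mtau := by
    rw [hτ, hti]
    ext i j
    fin_cases i <;> fin_cases j <;>
      simp [IcoAux.evm, Mtau, M3, v, phi, Matrix.smul_apply, smul_eq_mul, Matrix.vecHead,
        Matrix.vecTail] <;>
      [ring; ring; ring; ring;
       (linear_combination ((2/5 : ℂ) + (-2/5 : ℂ)*ε + (-2/5 : ℂ)*ε^2) * hsum);
       (linear_combination ((-3/5 : ℂ) + (2/5 : ℂ)*ε + (-2/5 : ℂ)*ε^3) * hsum);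
       ring;
       (linear_combination ((-3/5 : ℂ) + (2/5 : ℂ)*ε + (-2/5 : ℂ)*ε^3) * hsum);
       (linear_combination ((2/5 : ℂ) + (-2/5 : ℂ)*ε + (-2/5 : ℂ)*ε^2) * hsum)]
  have hid : IcoAux.evm ε idM = 1 := by
    ext i j
    fin_cases i <;> fin_cases j <;>
      simp [IcoAux.evm, idM, M3, v, phi, Matrix.one_apply, Matrix.vecHead, Matrix.vecTail] <;>
      norm_num
  set Cg := Subgroup.closure ({σ, τ} : Set (GL (Fin 3) ℂ)) with hCgdef
  have hσC : σ ∈ Cg := Subgroup.subset_closure (by simp)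
  have hτC : τ ∈ Cg := Subgroup.subset_closure (by simp)
  have hevinj : ∀ {A B : M33}, A ∈ Lm → B ∈ Lm → IcoAux.evm ε A = IcoAux.evm ε B → A = B :=
    fun hA hB h => IcoAux.evm_inj hprim (F7 _ hA) (F7 _ hB) h
  -- every element of the closure maps the 60-element set to itself
  have hQ : ∀ g : GL (Fin 3) ℂ, g ∈ Cg → ∀ A ∈ Lm, ∃ B ∈ Lm,
      (↑g : Matrix (Fin 3) (Fin 3) ℂ) * IcoAux.evm ε A = IcoAux.evm ε B := by
    intro g hg
    refine Subgroup.closure_induction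
      (p := fun (g : GL (Fin 3) ℂ) _ => ∀ A ∈ Lm, ∃ B ∈ Lm,
        (↑g : Matrix (Fin 3) (Fin 3) ℂ) * IcoAux.evm ε A = IcoAux.evm ε B) ?_ ?_ ?_ ?_ hg
    · intro x hx A hA
      rcases (show x = σ ∨ x = τ by simpa using hx) with hx1 | hx1 <;> rw [hx1]
      · obtain ⟨B, hB, hBe⟩ := (F2 A hA).1
        exact ⟨B, hB, by rw [hσc]; exact IcoAux.evm_mul hε5 hsum hBe⟩
      · obtain ⟨B, hB, hBe⟩ := (F2 A hA).2
        exact ⟨B, hB, by rw [hτc]; exact IcoAux.evm_mul hε5 hsum hBe⟩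
    · intro A hA
      exact ⟨A, hA, by rw [Units.val_one, one_mul]⟩
    · intro x y hx hy ihx ihy A hA
      obtain ⟨B, hB, hBe⟩ := ihy A hA
      obtain ⟨Cc, hC, hCe⟩ := ihx B hB
      exact ⟨Cc, hC, by rw [Units.val_mul, mul_assoc, hBe, hCe]⟩
    · intro x hx ih A hA
      have hxc : ∀ {X Y : Matrix (Fin 3) (Fin 3) ℂ},
          (↑x : Matrix (Fin 3) (Fin 3) ℂ) * X = (↑x : Matrix (Fin 3) (Fin 3) ℂ) * Y → X = Y :=
        fun h => (Units.mul_right_inj x).mp h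
      let f : {B // B ∈ Lm.toFinset} → {B // B ∈ Lm.toFinset} := fun Bp =>
        ⟨Classical.choose (ih Bp.1 (List.mem_toFinset.mp Bp.2)),
          List.mem_toFinset.mpr (Classical.choose_spec (ih Bp.1 (List.mem_toFinset.mp Bp.2))).1⟩
      have hfinj : Function.Injective f := by
        intro B1 B2 h12
        have hv : Classical.choose (ih B1.1 (List.mem_toFinset.mp B1.2)) =
            Classical.choose (ih B2.1 (List.mem_toFinset.mp B2.2)) :=
          congrArg Subtype.val h12
        have s1 := (Classical.choose_spec (ih B1.1 (List.mem_toFinset.mp B1.2))).2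
        have s2 := (Classical.choose_spec (ih B2.1 (List.mem_toFinset.mp B2.2))).2
        rw [hv, ← s2] at s1
        exact Subtype.ext (hevinj (List.mem_toFinset.mp B1.2) (List.mem_toFinset.mp B2.2)
          (hxc s1))
      obtain ⟨B0, hB0⟩ := Finite.injective_iff_surjective.mp hfinj ⟨A, List.mem_toFinset.mpr hA⟩
      refine ⟨B0.1, List.mem_toFinset.mp B0.2, ?_⟩
      have s0 := (Classical.choose_spec (ih B0.1 (List.mem_toFinset.mp B0.2))).2
      have hval : Classical.choose (ih B0.1 (List.mem_toFinset.mp B0.2)) = A :=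
        congrArg Subtype.val hB0
      rw [hval] at s0
      have hone : (↑(x⁻¹) : Matrix (Fin 3) (Fin 3) ℂ) * (↑x : Matrix (Fin 3) (Fin 3) ℂ) = 1 := by
        rw [← Units.val_mul, inv_mul_cancel, Units.val_one]
      rw [← s0, ← mul_assoc, hone, one_mul]
  have hP : ∀ g : GL (Fin 3) ℂ, g ∈ Cg → ∃ A, A ∈ Lm ∧ (↑g : Matrix (Fin 3) (Fin 3) ℂ) = IcoAux.evm ε A := by
    intro g hg
    obtain ⟨B, hB, hBe⟩ := hQ g hg idM F1.1
    exact ⟨B, hB, by rw [← hBe, hid, mul_one]⟩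
  obtain ⟨F0, hF0⟩ : ∃ F0 : GL (Fin 3) ℂ → Equiv.Perm (Fin 5),
      ∀ (g : GL (Fin 3) ℂ) (A : M33), A ∈ Lm → (↑g : Matrix (Fin 3) (Fin 3) ℂ) = IcoAux.evm ε A → F0 g = pi0 A := by
    refine ⟨fun g => if h : ∃ A, A ∈ Lm ∧ (↑g : Matrix (Fin 3) (Fin 3) ℂ) = IcoAux.evm ε A
      then pi0 h.choose else 1, ?_⟩
    intro g A hA hgA
    have hex : ∃ A, A ∈ Lm ∧ (↑g : Matrix (Fin 3) (Fin 3) ℂ) = IcoAux.evm ε A := ⟨A, hA, hgA⟩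
    beta_reduce
    rw [dif_pos hex]
    exact congrArg pi0 (hevinj hex.choose_spec.1 hA (hex.choose_spec.2.symm.trans hgA))
  have hF0one : F0 1 = 1 := by
    rw [hF0 1 idM F1.1 hid.symm, F4]
  have hmulkey : ∀ x ∈ ({σ, τ} : Set (GL (Fin 3) ℂ)), ∀ h : GL (Fin 3) ℂ, h ∈ Cg → F0 (x * h) = F0 x * F0 h := by
    intro x hx h hh
    obtain ⟨B, hB, hBe⟩ := hP h hh
    rcases (show x = σ ∨ x = τ by simpa using hx) with hx1 | hx1 <;> rw [hx1]
    · obtain ⟨Cc, hC, hCe⟩ := (F2 B hB).1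
      have h1 : (↑(σ * h) : Matrix (Fin 3) (Fin 3) ℂ) = IcoAux.evm ε Cc := by
        rw [Units.val_mul, hσc, hBe, IcoAux.evm_mul hε5 hsum hCe]
      rw [hF0 _ _ hC h1, hF0 _ _ F1.2.1 hσc, hF0 _ _ hB hBe, ← F3b Cc hC, hCe]
      exact (F3 B hB).1
    · obtain ⟨Cc, hC, hCe⟩ := (F2 B hB).2
      have h1 : (↑(τ * h) : Matrix (Fin 3) (Fin 3) ℂ) = IcoAux.evm ε Cc := by
        rw [Units.val_mul, hτc, hBe, IcoAux.evm_mul hε5 hsum hCe]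
      rw [hF0 _ _ hC h1, hF0 _ _ F1.2.2 hτc, hF0 _ _ hB hBe, ← F3b Cc hC, hCe]
      exact (F3 B hB).2
  have hmul : ∀ g : GL (Fin 3) ℂ, g ∈ Cg → ∀ h : GL (Fin 3) ℂ, h ∈ Cg → F0 (g * h) = F0 g * F0 h := by
    intro g hg
    refine Subgroup.closure_induction
      (p := fun (g : GL (Fin 3) ℂ) _ => ∀ h : GL (Fin 3) ℂ, h ∈ Cg → F0 (g * h) = F0 g * F0 h) ?_ ?_ ?_ ?_ hg
    · exact hmulkey
    · intro h hh; rw [one_mul, hF0one, one_mul]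
    · intro x y hx hy ihx ihy h hh
      rw [mul_assoc, ihx (y * h) (mul_mem hy hh), ihy h hh, ihx y hy, mul_assoc]
    · intro x hx ih h hh
      have hxinv : F0 x⁻¹ = (F0 x)⁻¹ := by
        have h1 := ih x⁻¹ (inv_mem hx)
        rw [mul_inv_cancel, hF0one] at h1
        exact (inv_eq_of_mul_eq_one_right h1.symm).symm
      have h2 := ih (x⁻¹ * h) (mul_mem (inv_mem hx) hh)
      rw [← mul_assoc, mul_inv_cancel, one_mul] at h2
      rw [hxinv, h2, ← mul_assoc, inv_mul_cancel, one_mul]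
  let F : ↥Cg →* Equiv.Perm (Fin 5) :=
    MonoidHom.mk' (fun g => F0 ↑g) (fun a b => hmul ↑a a.2 ↑b b.2)
  have hrep : ∀ g : ↥Cg, ∃ A, A ∈ Lm ∧
      ((↑g : GL (Fin 3) ℂ) : Matrix (Fin 3) (Fin 3) ℂ) = IcoAux.evm ε A :=
    fun g => hP ↑g g.2
  have hFalt : ∀ g : ↥Cg, F g ∈ alternatingGroup (Fin 5) := by
    intro g
    obtain ⟨A, hA, he⟩ := hrep g
    rw [Equiv.Perm.mem_alternatingGroup]
    show Equiv.Perm.sign (F0 ↑g) = 1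
    rw [hF0 _ _ hA he]
    exact F6 A hA
  let F' : ↥Cg →* ↥(alternatingGroup (Fin 5)) := F.codRestrict _ hFalt
  have hinj : Function.Injective F' := by
    intro g1 g2 h12
    obtain ⟨A1, hA1, he1⟩ := hrep g1
    obtain ⟨A2, hA2, he2⟩ := hrep g2
    have hpi : pi0 A1 = pi0 A2 := by
      have h0 : F0 ↑g1 = F0 ↑g2 := congrArg Subtype.val h12
      rwa [hF0 _ _ hA1 he1, hF0 _ _ hA2 he2] at h0
    have hA : A1 = A2 := List.inj_on_of_nodup_map F5 hA1 hA2 hpi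
    apply Subtype.ext; apply Units.ext
    rw [he1, he2, hA]
  have hfin : Finite ↥Cg := Finite.of_injective _ hinj
  have hreach : ∀ k, k < 60 →
      ∃ g : ↥Cg, ((↑g : GL (Fin 3) ℂ) : Matrix (Fin 3) (Fin 3) ℂ) = IcoAux.evm ε (Lm.getD k idM) := by
    intro k
    induction k using Nat.strong_induction_on with
    | _ k ihk =>
      intro hk
      match k with
      | 0 =>
        refine ⟨1, ?_⟩
        rw [F8.2.2.1]
        exact hid.symm
      | (k + 1) =>
        obtain ⟨hle, heq⟩ := F8.2.2.2 k (by omega)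
        obtain ⟨g, hg⟩ := ihk (preds.getD k (true, 0)).2 (by omega) (by omega)
        cases hb : (preds.getD k (true, 0)).1 with
        | true =>
          rw [hb, cond_true] at heq
          refine ⟨⟨σ, hσC⟩ * g, ?_⟩
          have : ((↑(⟨σ, hσC⟩ * g) : GL (Fin 3) ℂ) : Matrix (Fin 3) (Fin 3) ℂ)
              = (↑σ : Matrix (Fin 3) (Fin 3) ℂ) * ((↑g : GL (Fin 3) ℂ) : Matrix (Fin 3) (Fin 3) ℂ) := rfl
          rw [this, hσc, hg, IcoAux.evm_mul hε5 hsum heq]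
        | false =>
          rw [hb, cond_false] at heq
          refine ⟨⟨τ, hτC⟩ * g, ?_⟩
          have : ((↑(⟨τ, hτC⟩ * g) : GL (Fin 3) ℂ) : Matrix (Fin 3) (Fin 3) ℂ)
              = (↑τ : Matrix (Fin 3) (Fin 3) ℂ) * ((↑g : GL (Fin 3) ℂ) : Matrix (Fin 3) (Fin 3) ℂ) := rfl
          rw [this, hτc, hg, IcoAux.evm_mul hε5 hsum heq]
  have hLnodup : Lm.Nodup := F5.of_map
  have hlen : Lm.length = 60 := F8.1
  have hcard_ge : 60 ≤ Nat.card ↥Cg := by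
    have hJ : ∀ k : Fin 60, ∃ g : ↥Cg,
        ((↑g : GL (Fin 3) ℂ) : Matrix (Fin 3) (Fin 3) ℂ) = IcoAux.evm ε (Lm.getD k idM) :=
      fun k => hreach k k.2
    choose J hJspec using hJ
    have hJinj : Function.Injective J := by
      intro k1 k2 h
      have he : IcoAux.evm ε (Lm.getD k1 idM) = IcoAux.evm ε (Lm.getD k2 idM) := by
        rw [← hJspec k1, ← hJspec k2, h]
      have hk1 : (k1 : ℕ) < Lm.length := by rw [hlen]; exact k1.2
      have hk2 : (k2 : ℕ) < Lm.length := by rw [hlen]; exact k2.2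
      have hg1 : Lm.getD k1 idM ∈ Lm := by
        rw [List.getD_eq_getElem _ _ hk1]; exact List.getElem_mem _
      have hg2 : Lm.getD k2 idM ∈ Lm := by
        rw [List.getD_eq_getElem _ _ hk2]; exact List.getElem_mem _
      have hL : Lm.getD k1 idM = Lm.getD k2 idM := hevinj hg1 hg2 he
      rw [List.getD_eq_getElem _ _ hk1, List.getD_eq_getElem _ _ hk2] at hL
      exact Fin.ext ((List.Nodup.getElem_inj_iff hLnodup).mp hL)
    calc (60 : ℕ) = Nat.card (Fin 60) := by simp
      _ ≤ Nat.card ↥Cg := Nat.card_le_card_of_injective J hJinj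
  have hcard_alt : Nat.card ↥(alternatingGroup (Fin 5)) = 60 := by
    have h2 := two_mul_card_alternatingGroup (α := Fin 5)
    rw [Fintype.card_perm, Fintype.card_fin] at h2
    rw [Nat.card_eq_fintype_card]
    have : (5 : ℕ).factorial = 120 := by decide
    omega
  have hcard_le : Nat.card ↥Cg ≤ 60 := by
    rw [← hcard_alt]
    exact Nat.card_le_card_of_injective F' hinj
  have hcardC : Nat.card ↥Cg = 60 := le_antisymm hcard_le hcard_ge
  have hbij : Function.Bijective F' :=
    (Nat.bijective_iff_injective_and_card F').mpr ⟨hinj, by rw [hcardC, hcard_alt]⟩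
  exact ⟨hcardC, ⟨MulEquiv.ofBijective F' hbij⟩⟩
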